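/- arXiv:1401.7234 — 6 statements merged into one kernel-verified Lean document; each statement's English description precedes it below -/
import Mathlib

section
/- The subsets of [0,1] that are finite, contain 0 and 1, and are closed under the Łukasiewicz operations ¬x = 1 - x and x ⇒ y = min(1 - x + y, 1) are exactly the sets Łn = {i/n : 0 ≤ i ≤ n} for integers n ≥ 1. -/
noncomputable def lneg (x : ℝ) : ℝ := 1 - x
noncomputable def limp (x y : ℝ) : ℝ := min (1 - x + y) 1
noncomputable def lcon (x y : ℝ) : ℝ := max (x + y - 1) 0
noncomputable def ldis (x y : ℝ) : ℝ := min (x + y) 1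
noncomputable def lpow (x : ℝ) : ℕ → ℝ
  | 0 => 1
  | k+1 => lcon x (lpow x k)

/-- The finite Lukasiewicz chain Ln = {i/n : 0 <= i <= n} as a subset of R. -/
def Luk (n : ℕ) : Set ℝ := {x | ∃ i : ℕ, i ≤ n ∧ x = (i : ℝ) / n}

/-- Value of [a]phi at w: infimum of values at a-successors (empty inf = 1). -/
noncomputable def lbox {W : Type*} (R : W → W → Prop) (v : W → ℝ) (w : W) : ℝ :=
  sInf (insert 1 (v '' {u | R w u}))

/-- Value of <a>phi at w: supremum of values at a-successors (empty sup = 0). -/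
noncomputable def ldia {W : Type*} (R : W → W → Prop) (v : W → ℝ) (w : W) : ℝ :=
  sSup (insert 0 (v '' {u | R w u}))

/-!
Closure under `¬` and `⇒` gives closure under truncated subtraction `¬(x ⇒ y) = max (x - y) 0`
and truncated addition `¬x ⇒ y = min (x + y) 1`. If `d` is the least positive element of `S`,
subtracting `d` from `x ∈ S` as often as possible leaves a remainder in `S` below `d`, which
must be `0`; so `S` consists of multiples of `d`, `1 = n * d`, and adding `d` repeatedly
produces all of `Łn`.
-/

lemma lneg_limp (x y : ℝ) : lneg (limp x y) = max (x - y) 0 := by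
  unfold lneg limp
  rcases le_total (1 - x + y) 1 with h | h
  · rw [min_eq_left h, max_eq_left (by linarith)]; ring
  · rw [min_eq_right h, max_eq_right (by linarith)]; ring

lemma limp_lneg (x y : ℝ) : limp (lneg x) y = min (x + y) 1 := by
  unfold lneg limp; ring_nf

section Closed

variable {S : Set ℝ}

lemma sub_nat_mul_mem (hneg : ∀ x ∈ S, lneg x ∈ S) (himp : ∀ x ∈ S, ∀ y ∈ S, limp x y ∈ S)
    {x d : ℝ} (hx : x ∈ S) (hd : d ∈ S) (hd0 : 0 ≤ d) :
    ∀ k : ℕ, k * d ≤ x → x - k * d ∈ S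
  | 0, _ => by simpa using hx
  | k + 1, hk => by
    have hk' : (k : ℝ) * d ≤ x := by push_cast at hk; nlinarith
    have hmem := hneg _ (himp _ (sub_nat_mul_mem hneg himp hx hd hd0 k hk') d hd)
    rw [lneg_limp, max_eq_left (by push_cast at hk; linarith)] at hmem
    push_cast; convert hmem using 1; ring

lemma nat_mul_mem (hneg : ∀ x ∈ S, lneg x ∈ S) (himp : ∀ x ∈ S, ∀ y ∈ S, limp x y ∈ S)
    (h0 : (0 : ℝ) ∈ S) {d : ℝ} (hd : d ∈ S) (hd0 : 0 ≤ d) :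
    ∀ k : ℕ, k * d ≤ 1 → k * d ∈ S
  | 0, _ => by simpa using h0
  | k + 1, hk => by
    have hk' : (k : ℝ) * d ≤ 1 := by push_cast at hk; nlinarith
    have hmem := himp _ (hneg _ (nat_mul_mem hneg himp h0 hd hd0 k hk')) d hd
    rw [limp_lneg, min_eq_left (by push_cast at hk; linarith)] at hmem
    push_cast; convert hmem using 1; ring

lemma exists_eq_nat_mul_of_isLeast (hneg : ∀ x ∈ S, lneg x ∈ S)
    (himp : ∀ x ∈ S, ∀ y ∈ S, limp x y ∈ S) {d : ℝ} (hd : IsLeast (S ∩ Set.Ioi 0) d)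
    {x : ℝ} (hx : x ∈ S) (hx0 : 0 ≤ x) : ∃ m : ℕ, x = m * d := by
  obtain ⟨⟨hdS, hd0 : (0 : ℝ) < d⟩, hmin⟩ := hd
  set m := ⌊x / d⌋₊
  have hmx : (m : ℝ) * d ≤ x := (le_div_iff₀ hd0).1 (Nat.floor_le (div_nonneg hx0 hd0.le))
  have hxm : x < (m + 1) * d := (div_lt_iff₀ hd0).1 (Nat.lt_floor_add_one _)
  refine ⟨m, le_antisymm ?_ hmx⟩
  by_contra! hpos
  have := hmin ⟨sub_nat_mul_mem hneg himp hx hdS hd0.le m hmx, sub_pos.2 hpos⟩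
  linarith

lemma mem_Luk_iff_of_mul_eq_one {n : ℕ} {d x : ℝ} (h : n * d = 1) :
    x ∈ Luk n ↔ ∃ i ≤ n, x = i * d := by
  have hd : d = 1 / n := by
    rw [eq_div_iff (left_ne_zero_of_mul_eq_one h)]; linarith
  simp only [Luk, Set.mem_ofPred_eq, hd, mul_one_div]

lemma exists_eq_Luk_of_closed (hS : S ⊆ Set.Icc 0 1) (hfin : S.Finite) (h0 : (0 : ℝ) ∈ S)
    (h1 : (1 : ℝ) ∈ S) (hneg : ∀ x ∈ S, lneg x ∈ S) (himp : ∀ x ∈ S, ∀ y ∈ S, limp x y ∈ S) :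
    ∃ n : ℕ, 1 ≤ n ∧ S = Luk n := by
  obtain ⟨d, hdmem, hdmin⟩ :=
    Set.exists_min_image _ id (hfin.inter_of_left (Set.Ioi 0)) ⟨1, h1, Set.mem_Ioi.2 one_pos⟩
  have hd : IsLeast (S ∩ Set.Ioi 0) d := ⟨hdmem, hdmin⟩
  have hd0 : (0 : ℝ) < d := hdmem.2
  have hmul (x) (hx : x ∈ S) : ∃ m : ℕ, x = m * d :=
    exists_eq_nat_mul_of_isLeast hneg himp hd hx (hS hx).1
  obtain ⟨n, hn⟩ := hmul 1 h1
  refine ⟨n, Nat.one_le_iff_ne_zero.2 (by rintro rfl; simp at hn), Set.ext fun x ↦ ?_⟩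
  rw [mem_Luk_iff_of_mul_eq_one hn.symm]
  constructor
  · intro hx
    obtain ⟨m, rfl⟩ := hmul x hx
    refine ⟨m, ?_, rfl⟩
    have : (m : ℝ) * d ≤ n * d := hn ▸ (hS hx).2
    exact_mod_cast le_of_mul_le_mul_right this hd0
  · rintro ⟨i, hi, rfl⟩
    refine nat_mul_mem hneg himp h0 hdmem.1 hd0.le i (hn ▸ ?_)
    gcongr

end Closed

section Luk

variable {n : ℕ}

lemma Luk_subset_Icc (n : ℕ) : Luk n ⊆ Set.Icc 0 1 := by
  rintro _ ⟨i, hi, rfl⟩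
  exact ⟨by positivity, div_le_one_of_le₀ (by exact_mod_cast hi) n.cast_nonneg⟩

lemma finite_Luk (n : ℕ) : (Luk n).Finite :=
  ((Set.finite_Iic n).image fun i : ℕ ↦ (i : ℝ) / n).subset fun _ ⟨i, hi, hx⟩ ↦ ⟨i, hi, hx.symm⟩

lemma zero_mem_Luk (n : ℕ) : (0 : ℝ) ∈ Luk n := ⟨0, n.zero_le, by simp⟩

lemma one_mem_Luk (hn : n ≠ 0) : (1 : ℝ) ∈ Luk n :=
  ⟨n, le_rfl, (div_self (Nat.cast_ne_zero.2 hn)).symm⟩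

lemma lneg_mem_Luk (hn : n ≠ 0) {x : ℝ} (hx : x ∈ Luk n) : lneg x ∈ Luk n := by
  obtain ⟨i, hi, rfl⟩ := hx
  refine ⟨n - i, n.sub_le i, ?_⟩
  have : (n : ℝ) ≠ 0 := Nat.cast_ne_zero.2 hn
  rw [lneg, Nat.cast_sub hi]
  field_simp

lemma limp_mem_Luk (hn : n ≠ 0) {x y : ℝ} (hx : x ∈ Luk n) (hy : y ∈ Luk n) :
    limp x y ∈ Luk n := by
  obtain ⟨i, hi, rfl⟩ := hx
  obtain ⟨j, hj, rfl⟩ := hy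
  have hn' : (0 : ℝ) < n := by positivity
  rcases le_total i j with hij | hji
  · have : (i : ℝ) / n ≤ j / n := by gcongr
    rw [limp, min_eq_right (by linarith)]
    exact one_mem_Luk hn
  · have key : 1 - (i : ℝ) / n + j / n = ((n - (i - j) : ℕ) : ℝ) / n := by
      push_cast [Nat.cast_sub hji, Nat.cast_sub ((Nat.sub_le i j).trans hi)]
      field_simp
      ring
    have hle : ((n - (i - j) : ℕ) : ℝ) / n ≤ 1 :=
      div_le_one_of_le₀ (by exact_mod_cast Nat.sub_le _ _) n.cast_nonneg
    rw [limp, key, min_eq_left hle]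
    exact ⟨n - (i - j), Nat.sub_le _ _, rfl⟩

end Luk

/-- The finite subsets of [0,1] containing 0,1 and closed under neg and imp
are exactly the sets Ln for integers n >= 1. -/
theorem stmt5 (S : Set ℝ) :
    (S ⊆ Set.Icc (0:ℝ) 1 ∧ S.Finite ∧ (0:ℝ) ∈ S ∧ (1:ℝ) ∈ S ∧
      (∀ x ∈ S, lneg x ∈ S) ∧ (∀ x ∈ S, ∀ y ∈ S, limp x y ∈ S)) ↔
    ∃ n : ℕ, 1 ≤ n ∧ S = Luk n := by
  constructor
  · rintro ⟨hS, hfin, h0, h1, hneg, himp⟩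
    exact exists_eq_Luk_of_closed hS hfin h0 h1 hneg himp
  · rintro ⟨n, hn, rfl⟩
    have hn0 : n ≠ 0 := Nat.one_le_iff_ne_zero.1 hn
    exact ⟨Luk_subset_Icc n, finite_Luk n, zero_mem_Luk n, one_mem_Luk hn0,
      fun _ ↦ lneg_mem_Luk hn0, fun _ hx _ ↦ limp_mem_Luk hn0 hx⟩
end

section
/- In any (n+1)-valued Kripke model, where R_{α*} is the reflexive-transitive closure of R_α, for every world w and formula p: Val(w, [α*]p) = min(Val(w, p), Val(w, [α][α*]p)). -/
/-! A real `c` lies below the value of `[β]φ` at `w` iff `c ≤ 1` and `c` lies below the value of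
`φ` at every `β`-successor of `w`. Comparing lower bounds therefore reduces the identity to the
fact that an `α*`-path from `w` is either trivial or begins with an `α`-step. -/

open Relation

theorem nonneg_of_mem_Luk {n : ℕ} {x : ℝ} (hx : x ∈ Luk n) : 0 ≤ x := by
  obtain ⟨i, -, rfl⟩ := hx
  positivity

section lbox

variable {W : Type*} {R : W → W → Prop} {v : W → ℝ}

theorem le_lbox_iff (hv : BddBelow (Set.range v)) {w : W} {c : ℝ} :
    c ≤ lbox R v w ↔ c ≤ 1 ∧ ∀ u, R w u → c ≤ v u := by
  obtain ⟨b, hb⟩ := hv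
  have hbdd : BddBelow (insert 1 (v '' {u | R w u})) := by
    refine ⟨min 1 b, ?_⟩
    rintro x (rfl | ⟨u, -, rfl⟩)
    · exact min_le_left _ _
    · exact (min_le_right _ _).trans (hb ⟨u, rfl⟩)
  rw [lbox, le_csInf_iff hbdd (Set.insert_nonempty _ _)]
  simp

theorem bddBelow_range_lbox (hv : BddBelow (Set.range v)) :
    BddBelow (Set.range (lbox R v)) := by
  obtain ⟨b, hb⟩ := hv
  refine ⟨min 1 b, ?_⟩
  rintro _ ⟨w, rfl⟩
  exact (le_lbox_iff ⟨b, hb⟩).2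
    ⟨min_le_left _ _, fun u _ => (min_le_right _ _).trans (hb ⟨u, rfl⟩)⟩

theorem lbox_reflTransGen_eq_min (hv : BddBelow (Set.range v)) (w : W) :
    lbox (ReflTransGen R) v w = min (v w) (lbox R (lbox (ReflTransGen R) v) w) := by
  refine eq_of_forall_le_iff fun c => ?_
  simp only [le_min_iff, le_lbox_iff hv, le_lbox_iff (bddBelow_range_lbox hv)]
  constructor
  · rintro ⟨h1, hall⟩
    exact ⟨hall w .refl, h1, fun z hz => ⟨h1, fun u hu => hall u (.head hz hu)⟩⟩
  · rintro ⟨hw, h1, hsucc⟩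
    refine ⟨h1, fun u hu => ?_⟩
    rcases hu.cases_head with rfl | ⟨z, hz, hzu⟩
    · exact hw
    · exact (hsucc z hz).2 u hzu

end lbox

theorem stmt10_general {W : Type*} (n : ℕ) (R : W → W → Prop)
    (v : W → ℝ) (hv : ∀ u, v u ∈ Luk n) (w : W) :
    lbox (Relation.ReflTransGen R) v w =
      min (v w) (lbox R (lbox (Relation.ReflTransGen R) v) w) :=
  lbox_reflTransGen_eq_min ⟨0, by rintro _ ⟨u, rfl⟩; exact nonneg_of_mem_Luk (hv u)⟩ w

theorem stmt10 {W : Type*} (n : ℕ) (hn : 1 ≤ n) (R : W → W → Prop)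
    (v : W → ℝ) (hv : ∀ u, v u ∈ Luk n) (w : W) :
    lbox (Relation.ReflTransGen R) v w =
      min (v w) (lbox R (lbox (Relation.ReflTransGen R) v) w) :=
  stmt10_general n R v hv w
end

section
/- In any (n+1)-valued Kripke model, the many-valued induction axiom holds: for every world w, program α, and formula p, min(Val(w,p), Val(w, [α*]((p ⇒ [α]p)^n))) ≤ Val(w, [α*]p), where x^n is the n-fold Łukasiewicz strong-conjunction power and ⇒ is the Łukasiewicz implication. -/
theorem lpow_eq (x : ℝ) (k : ℕ) : lpow x k = max (1 - k * (1 - x)) 0 := by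
  induction k with
  | zero => simp [lpow]
  | succ k ih =>
    rw [lpow, lcon, ih]
    push_cast
    rcases le_total 0 (1 - k * (1 - x)) with h | h
    · rw [max_eq_left h]; ring_nf
    · have hx : x ≤ 1 := by nlinarith [(k.cast_nonneg : (0 : ℝ) ≤ k)]
      rw [max_eq_right h, max_eq_right (by linarith), max_eq_right (by linarith)]

theorem lpow_nonneg (x : ℝ) (k : ℕ) : 0 ≤ lpow x k :=
  lpow_eq x k ▸ le_max_right _ _

namespace Luk

variable {n : ℕ} {x y : ℝ}

theorem nonneg (hx : x ∈ Luk n) : 0 ≤ x := by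
  obtain ⟨i, -, rfl⟩ := hx
  positivity

theorem le_one (hx : x ∈ Luk n) : x ≤ 1 := by
  obtain ⟨i, hi, rfl⟩ := hx
  exact div_le_one_of_le₀ (by exact_mod_cast hi) n.cast_nonneg

theorem one_mem (hn : 1 ≤ n) : (1 : ℝ) ∈ Luk n :=
  ⟨n, le_rfl, (div_self (by positivity)).symm⟩

theorem finite (n : ℕ) : (Luk n).Finite :=
  ((Set.finite_Iic n).image fun i : ℕ => (i : ℝ) / n).subset fun _ ⟨i, hi, hx⟩ => ⟨i, hi, hx.symm⟩

theorem one_le_mul_sub_of_lt (hn : 1 ≤ n) (hx : x ∈ Luk n) (hy : y ∈ Luk n) (hyx : y < x) :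
    1 ≤ n * (x - y) := by
  obtain ⟨i, -, rfl⟩ := hx
  obtain ⟨j, -, rfl⟩ := hy
  have hn0 : (0 : ℝ) < n := by exact_mod_cast hn
  have hji : j < i := by exact_mod_cast (div_lt_div_iff_of_pos_right hn0).mp hyx
  rw [mul_sub, mul_div_cancel₀ _ hn0.ne', mul_div_cancel₀ _ hn0.ne']
  have : (j : ℝ) + 1 ≤ i := by exact_mod_cast hji
  linarith

theorem lpow_limp_eq_zero (hn : 1 ≤ n) (hx : x ∈ Luk n) (hy : y ∈ Luk n) (hyx : y < x) :
    lpow (limp x y) n = 0 := by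
  have hgap := one_le_mul_sub_of_lt hn hx hy hyx
  rw [lpow_eq, limp, min_eq_left (by linarith)]
  exact max_eq_right (by linarith)

theorem min_lpow_limp_le (hn : 1 ≤ n) (hx : x ∈ Luk n) (hy : y ∈ Luk n) :
    min x (lpow (limp x y) n) ≤ y := by
  rcases le_or_gt x y with hxy | hyx
  · exact (min_le_left _ _).trans hxy
  · rw [lpow_limp_eq_zero hn hx hy hyx]
    exact (min_le_right _ _).trans (nonneg hy)

end Luk

section lbox

variable {W : Type*} {R : W → W → Prop} {v : W → ℝ} {w u : W}

theorem lbox_le (hv : ∀ u, 0 ≤ v u) (hwu : R w u) : lbox R v w ≤ v u :=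
  csInf_le ⟨0, Set.forall_mem_insert.2 ⟨zero_le_one, Set.forall_mem_image.2 fun u _ => hv u⟩⟩
    (Set.mem_insert_of_mem _ ⟨u, hwu, rfl⟩)

theorem le_lbox {a : ℝ} (ha : a ≤ 1) (h : ∀ u, R w u → a ≤ v u) : a ≤ lbox R v w :=
  le_csInf (Set.insert_nonempty _ _) (Set.forall_mem_insert.2 ⟨ha, Set.forall_mem_image.2 h⟩)

theorem lbox_mem_luk {n : ℕ} (hn : 1 ≤ n) (hv : ∀ u, v u ∈ Luk n) (w : W) :
    lbox R v w ∈ Luk n := by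
  have hsub : insert 1 (v '' {u | R w u}) ⊆ Luk n :=
    Set.insert_subset (Luk.one_mem hn) (Set.image_subset_iff.2 fun u _ => hv u)
  exact hsub ((Set.insert_nonempty _ _).csInf_mem ((Luk.finite n).subset hsub))

end lbox

theorem stmt11 {W : Type*} (n : ℕ) (hn : 1 ≤ n) (R : W → W → Prop)
    (p : W → ℝ) (hp : ∀ u, p u ∈ Luk n) (w : W) :
    min (p w)
        (lbox (Relation.ReflTransGen R) (fun u => lpow (limp (p u) (lbox R p u)) n) w)
      ≤ lbox (Relation.ReflTransGen R) p w := by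
  set c := lbox (Relation.ReflTransGen R) (fun u => lpow (limp (p u) (lbox R p u)) n) w
  have hp0 u : 0 ≤ p u := Luk.nonneg (hp u)
  refine le_lbox ((min_le_left _ _).trans (Luk.le_one (hp w))) fun u hwu => ?_
  induction hwu with
  | refl => exact min_le_left _ _
  | @tail b b' hwb hbb' ih =>
    have hc : c ≤ lpow (limp (p b) (lbox R p b)) n :=
      lbox_le (fun _ => lpow_nonneg _ _) hwb
    calc min (p w) c ≤ min (p b) (lpow (limp (p b) (lbox R p b)) n) :=
          le_min ih ((min_le_right _ _).trans hc)
      _ ≤ lbox R p b := Luk.min_lpow_limp_le hn (hp b) (lbox_mem_luk hn hp b)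
      _ ≤ p b' := lbox_le hp0 hbb'
end

section
/- There exists a Kripke model with values in the set {0, 1/4, 1/2, 3/4, 1} in which the naive induction formula fails: the two-world model W = {u, v} with R_a = {(u,v)}, Val(u,p) = 3/4, Val(v,p) = 1/4 satisfies Val(u, p ∧ [a*](p ⇒ [a]p)) = 1/2 > 1/4 = Val(u, [a*]p); hence (p ∧ [α*](p ⇒ [α]p)) ⇒ [α*]p is not a tautology of many-valued PDL. -/
set_option linter.unreachableTactic false
set_option linter.unusedTactic false



theorem stmt12 :
    let R : Bool → Bool → Prop := fun a b => a = false ∧ b = true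
    let p : Bool → ℝ := fun b => if b then 1/4 else 3/4
    min (p false)
        (lbox (Relation.ReflTransGen R) (fun u => limp (p u) (lbox R p u)) false) = 1/2 ∧
    lbox (Relation.ReflTransGen R) p false = 1/4 ∧
    ¬ (min (p false)
        (lbox (Relation.ReflTransGen R) (fun u => limp (p u) (lbox R p u)) false)
        ≤ lbox (Relation.ReflTransGen R) p false) := by
  intro R p
  have hRf : {u | R false u} = {true} := by ext u; simp [R]
  have hRt : {u | R true u} = ∅ := by ext u; simp [R]
  have hS : {u | Relation.ReflTransGen R false u} = Set.univ := by
    ext u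
    simp only [Set.mem_setOf_eq, Set.mem_univ, iff_true]
    cases u
    · exact Relation.ReflTransGen.refl
    · exact Relation.ReflTransGen.single ⟨rfl, rfl⟩
  have hb1 : lbox R p false = 1/4 := by
    rw [lbox, hRf, Set.image_singleton]
    have : (insert 1 {p true} : Set ℝ) = {1, p true} := rfl
    rw [this, csInf_pair]
    simp [p]; norm_num
  have hb2 : lbox R p true = 1 := by
    rw [lbox, hRt]; simp
  have huniv : (Set.univ : Set Bool) = {false, true} := by
    ext u; cases u <;> simp
  have himg : ∀ (f : Bool → ℝ), f '' (Set.univ : Set Bool) = {f false, f true} := by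
    intro f; rw [huniv, Set.image_insert_eq, Set.image_singleton]
  have key : lbox (Relation.ReflTransGen R) (fun u => limp (p u) (lbox R p u)) false = 1/2 := by
    rw [lbox, hS, himg]
    simp only [hb1, hb2]
    have e1 : limp (p false) (1/4) = 1/2 := by simp [limp, p]; norm_num
    have e2 : limp (p true) 1 = 1 := by simp [limp, p]; norm_num
    rw [e1, e2]
    have : (insert 1 {(1:ℝ)/2, 1} : Set ℝ) = {1/2, 1} := by
      ext x; constructor <;> simp <;> tauto
    rw [this, csInf_pair]
    norm_num
  have key2 : lbox (Relation.ReflTransGen R) p false = 1/4 := by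
    rw [lbox, hS, himg]
    have : (insert 1 {p false, p true} : Set ℝ) = {1/4, 3/4, 1} := by
      ext x; simp [p]; constructor <;> rintro (h|h|h) <;> simp [h] <;> tauto
    rw [this]
    have hb : BddBelow ({3/4, 1} : Set ℝ) := Set.Finite.bddBelow (by simp)
    rw [csInf_insert hb ⟨3/4, by simp⟩, csInf_pair]
    norm_num
  refine ⟨?_, key2, ?_⟩
  · rw [key]; simp [p]; norm_num
  · rw [key, key2]; simp [p]; norm_num
end

section
/- For each i ∈ {1, ..., n} there exists a unary term τ_{i/n} built by composing the operations x ↦ x ⊕ x and x ↦ x ⊙ x (Łukasiewicz doubling operations) such that for all x ∈ Łn = {j/n : 0 ≤ j ≤ n}: τ_{i/n}(x) = 1 if x ≥ i/n and τ_{i/n}(x) = 0 if x < i/n. -/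
noncomputable def ldbl (x : ℝ) : ℝ := min (x + x) 1
noncomputable def lsq (x : ℝ) : ℝ := max (x + x - 1) 0

/-!
Writing `x = j / n`, the two doublings act on the numerator `j` by `j ↦ min (2j) n` and
`j ↦ 2j - n` (truncated at `0`), which are monotone and fix `0` and `n`.
So it suffices to find a composite sending `i - 1` to `0` and `i` to `n`.
While the two points lie in the same half of `[0, n]`, one doubling map
doubles their distance; once they straddle `n / 2`, squaring sends the lower one to `0`
and keeps the upper one positive, and repeated doubling then pushes it up to `n`.
-/

noncomputable def lukTerm (L : List Bool) (x : ℝ) : ℝ :=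
  L.foldr (fun b r => if b then ldbl r else lsq r) x

lemma lukTerm_cons (b : Bool) (L : List Bool) (x : ℝ) :
    lukTerm (b :: L) x = if b then ldbl (lukTerm L x) else lsq (lukTerm L x) := rfl

def numStep (n : ℕ) : Bool → ℕ → ℕ
  | true, j => min (2 * j) n
  | false, j => 2 * j - n

def numTerm (n : ℕ) (L : List Bool) (j : ℕ) : ℕ := L.foldr (numStep n) j

section numTerm

variable {n : ℕ}

@[simp]
lemma numTerm_nil (j : ℕ) : numTerm n [] j = j := rfl

@[simp]
lemma numTerm_cons (b : Bool) (L : List Bool) (j : ℕ) :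
    numTerm n (b :: L) j = numStep n b (numTerm n L j) := rfl

lemma numTerm_append (L M : List Bool) (j : ℕ) :
    numTerm n (L ++ M) j = numTerm n L (numTerm n M j) :=
  List.foldr_append

lemma numStep_mono (b : Bool) : Monotone (numStep n b) := by
  intro j k hjk
  cases b <;> simp only [numStep] <;> omega

lemma numTerm_mono (L : List Bool) : Monotone (numTerm n L) := by
  induction L with
  | nil => exact monotone_id
  | cons b L ih => exact (numStep_mono b).comp ih

@[simp]
lemma numTerm_zero (L : List Bool) : numTerm n L 0 = 0 := by
  induction L with
  | nil => rfl
  | cons b L ih => cases b <;> simp [ih, numStep]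

@[simp]
lemma numTerm_self (L : List Bool) : numTerm n L n = n := by
  induction L with
  | nil => rfl
  | cons b L ih => cases b <;> simp only [numTerm_cons, ih, numStep] <;> omega

lemma numTerm_le {j : ℕ} (L : List Bool) (hj : j ≤ n) : numTerm n L j ≤ n :=
  (numTerm_mono L hj).trans_eq (numTerm_self L)

lemma numTerm_replicate_true {j : ℕ} (hj : j ≤ n) (k : ℕ) :
    numTerm n (List.replicate k true) j = min (2 ^ k * j) n := by
  induction k with
  | zero => simpa using hj
  | succ k ih =>
    rw [List.replicate_succ, numTerm_cons, ih, numStep, pow_succ', mul_assoc]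
    omega

lemma exists_numTerm_eq_self {b : ℕ} (hb : 0 < b) (hbn : b ≤ n) : ∃ L, numTerm n L b = n := by
  refine ⟨List.replicate n true, ?_⟩
  rw [numTerm_replicate_true hbn]
  have : n ≤ 2 ^ n * b := (Nat.lt_two_pow_self).le.trans (Nat.le_mul_of_pos_right _ hb)
  omega

lemma exists_numTerm_separating {a b : ℕ} (hab : a < b) (hbn : b ≤ n) :
    ∃ L, numTerm n L a = 0 ∧ numTerm n L b = n := by
  by_cases ha : a = 0
  · obtain ⟨L, hL⟩ := exists_numTerm_eq_self (n := n) (b := b) (by omega) hbn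
    exact ⟨L, by simp [ha], hL⟩
  by_cases hlow : 2 * b ≤ n
  · obtain ⟨L, hLa, hLb⟩ := exists_numTerm_separating (a := 2 * a) (b := 2 * b) (by omega) hlow
    refine ⟨L ++ [true], ?_, ?_⟩ <;>
      simp only [numTerm_append, numTerm_cons, numTerm_nil, numStep]
    · rwa [min_eq_left (by omega)]
    · rwa [min_eq_left hlow]
  by_cases hhigh : n ≤ 2 * a
  · obtain ⟨L, hLa, hLb⟩ :=
      exists_numTerm_separating (a := 2 * a - n) (b := 2 * b - n) (by omega) (by omega)
    exact ⟨L ++ [false], by simpa [numTerm_append, numStep] using hLa,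
      by simpa [numTerm_append, numStep] using hLb⟩
  -- `a < n / 2 < b`: squaring sends `a` to `0` and `b` to `2b - n > 0`.
  obtain ⟨L, hL⟩ := exists_numTerm_eq_self (n := n) (b := 2 * b - n) (by omega) (by omega)
  refine ⟨L ++ [false], ?_, ?_⟩ <;> simp only [numTerm_append, numTerm_cons, numTerm_nil, numStep]
  · simp [show 2 * a - n = 0 by omega]
  · simpa using hL
termination_by n - (b - a)

end numTerm

lemma ldbl_div_natCast {n : ℕ} (hn : 0 < n) (j : ℕ) :
    ldbl ((j : ℝ) / n) = (numStep n true j : ℝ) / n := by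
  have hn' : (0 : ℝ) < n := by exact_mod_cast hn
  rw [ldbl, numStep, Nat.cast_min, ← min_div_div_right hn'.le, div_self hn'.ne']
  push_cast
  ring_nf

lemma lsq_div_natCast {n : ℕ} (hn : 0 < n) (j : ℕ) :
    lsq ((j : ℝ) / n) = (numStep n false j : ℝ) / n := by
  have hn' : (0 : ℝ) < n := by exact_mod_cast hn
  rw [lsq, numStep]
  rcases le_total n (2 * j) with h | h
  · rw [Nat.cast_sub h, max_eq_left]
    · push_cast; field_simp; ring
    · rw [← add_div, sub_nonneg, one_le_div hn']
      exact_mod_cast (by omega : n ≤ j + j)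
  · rw [Nat.sub_eq_zero_of_le h, max_eq_right]
    · simp
    · rw [← add_div, sub_nonpos, div_le_one hn']
      exact_mod_cast (by omega : j + j ≤ n)

lemma lukTerm_div_natCast {n : ℕ} (hn : 0 < n) (L : List Bool) (j : ℕ) :
    lukTerm L ((j : ℝ) / n) = (numTerm n L j : ℝ) / n := by
  induction L with
  | nil => rfl
  | cons b L ih =>
    rw [lukTerm_cons, ih, numTerm_cons]
    cases b
    · exact lsq_div_natCast hn _
    · exact ldbl_div_natCast hn _

theorem stmt15_general (n : ℕ) (i : ℕ) (hi1 : 1 ≤ i) (hin : i ≤ n) :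
    ∃ L : List Bool, ∀ x ∈ Luk n,
      ((i : ℝ) / n ≤ x → L.foldr (fun b r => if b then ldbl r else lsq r) x = 1) ∧
      (x < (i : ℝ) / n → L.foldr (fun b r => if b then ldbl r else lsq r) x = 0) := by
  have hn : 0 < n := by omega
  have hn' : (0 : ℝ) < n := by exact_mod_cast hn
  obtain ⟨L, hL0, hLn⟩ := exists_numTerm_separating (n := n) (a := i - 1) (b := i) (by omega) hin
  refine ⟨L, ?_⟩
  rintro x ⟨j, hjn, rfl⟩
  change (_ → lukTerm L _ = 1) ∧ (_ → lukTerm L _ = 0)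
  rw [lukTerm_div_natCast hn, div_le_div_iff_of_pos_right hn', div_lt_div_iff_of_pos_right hn']
  constructor
  · intro hij
    have hup : n ≤ numTerm n L j := hLn.symm.le.trans (numTerm_mono L (by exact_mod_cast hij))
    rw [le_antisymm (numTerm_le L hjn) hup, div_self hn'.ne']
  · intro hji
    have hji' : j ≤ i - 1 := Nat.le_sub_one_of_lt (by exact_mod_cast hji)
    have hdown : numTerm n L j ≤ 0 := (numTerm_mono L hji').trans_eq hL0
    simp [Nat.le_zero.mp hdown]

theorem stmt15 (n : ℕ) (hn : 1 ≤ n) (i : ℕ) (hi1 : 1 ≤ i) (hin : i ≤ n) :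
    ∃ L : List Bool, ∀ x ∈ Luk n,
      ((i : ℝ) / n ≤ x → L.foldr (fun b r => if b then ldbl r else lsq r) x = 1) ∧
      (x < (i : ℝ) / n → L.foldr (fun b r => if b then ldbl r else lsq r) x = 0) :=
  stmt15_general n i hi1 hin
end

section
/- In any (n+1)-valued non-standard Kripke model M (in particular any standard one), if M ⊨ (φ ⇒ [α]φ)^n (i.e., Val(w, (φ ⇒ [α]φ)^n) = 1 for every world w) then M ⊨ φ ⇒ [α*]φ, where R_{α*} is any reflexive and transitive extension of R_α and M validates the induction axiom (φ ∧ [α*](φ ⇒ [α]φ)^n) ⇒ [α*]φ. -/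
lemma le_one_of_mem_Luk {n : ℕ} {x : ℝ} (hx : x ∈ Luk n) : x ≤ 1 := by
  obtain ⟨i, hi, rfl⟩ := hx
  exact div_le_one_of_le₀ (by exact_mod_cast hi) n.cast_nonneg

lemma limp_eq_one_of_le {x y : ℝ} (h : x ≤ y) : limp x y = 1 :=
  min_eq_right (by linarith)

lemma lbox_eq_one_of_forall {W : Type*} {R : W → W → Prop} {v : W → ℝ} {w : W}
    (h : ∀ u, R w u → v u = 1) : lbox R v w = 1 := by
  have hvals : insert 1 (v '' {u | R w u}) = {1} := by
    refine (Set.insert_nonempty _ _).subset_singleton_iff.mp (Set.insert_subset rfl ?_)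
    rintro _ ⟨u, hu, rfl⟩
    exact h u hu
  rw [lbox, hvals, csInf_singleton]

theorem stmt19_general {W : Type*} (n : ℕ) (R Rstar : W → W → Prop)
    (p : W → ℝ) (hp : ∀ w, p w ∈ Luk n)
    (hind : ∀ w, min (p w) (lbox Rstar (fun u => lpow (limp (p u) (lbox R p u)) n) w)
      ≤ lbox Rstar p w)
    (hprem : ∀ w, lpow (limp (p w) (lbox R p w)) n = 1) :
    ∀ w, limp (p w) (lbox Rstar p w) = 1 := by
  intro w
  have hbox : lbox Rstar (fun u => lpow (limp (p u) (lbox R p u)) n) w = 1 :=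
    lbox_eq_one_of_forall fun u _ => hprem u
  apply limp_eq_one_of_le
  calc p w = min (p w) (lbox Rstar (fun u => lpow (limp (p u) (lbox R p u)) n) w) := by
        rw [hbox, min_eq_left (le_one_of_mem_Luk (hp w))]
    _ ≤ lbox Rstar p w := hind w

theorem stmt19 {W : Type*} (n : ℕ) (hn : 1 ≤ n) (R Rstar : W → W → Prop)
    (hrefl : ∀ w, Rstar w w)
    (htrans : ∀ u v w, Rstar u v → Rstar v w → Rstar u w)
    (hext : ∀ u v, R u v → Rstar u v)
    (p : W → ℝ) (hp : ∀ w, p w ∈ Luk n)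
    (hind : ∀ w, min (p w) (lbox Rstar (fun u => lpow (limp (p u) (lbox R p u)) n) w)
      ≤ lbox Rstar p w)
    (hprem : ∀ w, lpow (limp (p w) (lbox R p w)) n = 1) :
    ∀ w, limp (p w) (lbox Rstar p w) = 1 :=
  stmt19_general n R Rstar p hp hind hprem
end
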